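/- arXiv:2106.08271 — 5 statements merged into one kernel-verified Lean document; each statement's English description precedes it below -/
import Mathlib

section
/- Let α > 0, g₁, g₂ ∈ ℝ^n and y ∈ X. Let x⁺₁ and x⁺₂ be minimizers over X of x ↦ α⟨g₁, x⟩ + V_φ(x, y) and x ↦ α⟨g₂, x⟩ + V_φ(x, y) respectively (i.e., x⁺ᵢ ∈ X and α⟨gᵢ, x⁺ᵢ⟩ + V_φ(x⁺ᵢ, y) ≤ α⟨gᵢ, x⟩ + V_φ(x, y) for all x ∈ X). Then ‖x⁺₂ − x⁺₁‖ ≤ (α/σ_φ)‖g₂ − g₁‖. -/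
open scoped RealInnerProductSpace BigOperators

lemma limit_aux' {c C : ℝ} (hc : 0 ≤ c)
    (h : ∀ t : ℝ, 0 < t → t < 1 → (1 - t) * c ≤ C) : c ≤ C := by
  refine le_of_forall_pos_le_add (fun ε hε => ?_)
  set t := min (1/2 : ℝ) (ε / (c + 1)) with ht
  have ht0 : 0 < t := lt_min (by norm_num) (div_pos hε (by linarith))
  have ht1 : t < 1 := lt_of_le_of_lt (min_le_left _ _) (by norm_num)
  have htc : t * c ≤ ε := by
    have h1 : t ≤ ε / (c + 1) := min_le_right _ _
    have h2 : t * c ≤ (ε / (c + 1)) * c := mul_le_mul_of_nonneg_right h1 hc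
    have h3 : (ε / (c + 1)) * c ≤ ε := by
      rw [div_mul_eq_mul_div, div_le_iff₀ (by linarith)]
      nlinarith
    linarith
  have := h t ht0 ht1
  nlinarith

set_option maxHeartbeats 1600000 in
/-- Lemma 2 (Ghadimi): non-expansiveness of the Bregman-projection step with
respect to the linear term. -/
theorem bregman_step_nonexpansive
    {n : ℕ} (X : Set (EuclideanSpace ℝ (Fin n)))
    (hXne : X.Nonempty) (hXcompact : IsCompact X) (hXconvex : Convex ℝ X)
    (φ : EuclideanSpace ℝ (Fin n) → ℝ)
    (gradφ : EuclideanSpace ℝ (Fin n) → EuclideanSpace ℝ (Fin n))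
    (hφC1 : ContDiff ℝ 1 φ)
    (hgrad : ∀ x, HasGradientAt φ (gradφ x) x)
    (σ : ℝ) (hσ : 0 < σ)
    (hstrong : ∀ a b, φ b ≥ φ a + ⟪gradφ a, b - a⟫ + σ / 2 * ‖b - a‖ ^ 2)
    (V : EuclideanSpace ℝ (Fin n) → EuclideanSpace ℝ (Fin n) → ℝ)
    (hV : ∀ a b, V a b = φ a - φ b - ⟪gradφ b, a - b⟫)
    (α : ℝ) (hα : 0 < α)
    (g₁ g₂ y x₁ x₂ : EuclideanSpace ℝ (Fin n)) (hy : y ∈ X)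
    (hx₁ : x₁ ∈ X) (hx₂ : x₂ ∈ X)
    (hmin₁ : ∀ x ∈ X, α * ⟪g₁, x₁⟫ + V x₁ y ≤ α * ⟪g₁, x⟫ + V x y)
    (hmin₂ : ∀ x ∈ X, α * ⟪g₂, x₂⟫ + V x₂ y ≤ α * ⟪g₂, x⟫ + V x y) :
    ‖x₂ - x₁‖ ≤ α / σ * ‖g₂ - g₁‖ := by
  -- strong minimality
  have key : ∀ (g xs : EuclideanSpace ℝ (Fin n)), xs ∈ X →
      (∀ x ∈ X, α * ⟪g, xs⟫ + V xs y ≤ α * ⟪g, x⟫ + V x y) →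
      ∀ x ∈ X, α * ⟪g, xs⟫ + V xs y + σ / 2 * ‖x - xs‖ ^ 2 ≤ α * ⟪g, x⟫ + V x y := by
    intro g xs hxs hmin x hx
    have hmain : σ / 2 * ‖x - xs‖ ^ 2 ≤
        (α * ⟪g, x⟫ + V x y) - (α * ⟪g, xs⟫ + V xs y) := by
      refine limit_aux' (by positivity) (fun t ht0 ht1 => ?_)
      set z : EuclideanSpace ℝ (Fin n) := (1 - t) • xs + t • x with hz
      have hzX : z ∈ X := hXconvex hxs hx (by linarith) (le_of_lt ht0) (by ring)
      have hm := hmin z hzX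
      -- inner products
      have hig : ⟪g, z⟫ = (1 - t) * ⟪g, xs⟫ + t * ⟪g, x⟫ := by
        rw [hz, inner_add_right, real_inner_smul_right, real_inner_smul_right]
      have hiy : ⟪gradφ y, z - y⟫ =
          (1 - t) * ⟪gradφ y, xs - y⟫ + t * ⟪gradφ y, x - y⟫ := by
        have : z - y = (1 - t) • (xs - y) + t • (x - y) := by
          simp [hz, smul_sub]; module
        rw [this, inner_add_right, real_inner_smul_right, real_inner_smul_right]
      -- strong convexity of φ at z
      have h1 := hstrong z xs
      have h2 := hstrong z x
      have hxz : xs - z = (-t) • (x - xs) := by simp [hz, smul_sub]; module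
      have hx2z : x - z = (1 - t) • (x - xs) := by simp [hz, smul_sub]; module
      have hn1 : ‖xs - z‖ ^ 2 = t ^ 2 * ‖x - xs‖ ^ 2 := by
        rw [hxz, norm_smul]; simp [abs_of_pos ht0]; ring
      have hn2 : ‖x - z‖ ^ 2 = (1 - t) ^ 2 * ‖x - xs‖ ^ 2 := by
        rw [hx2z, norm_smul]; simp [abs_of_pos (by linarith : (0:ℝ) < 1 - t)]; ring
      have hi1 : ⟪gradφ z, xs - z⟫ = (-t) * ⟪gradφ z, x - xs⟫ := by
        rw [hxz, real_inner_smul_right]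
      have hi2 : ⟪gradφ z, x - z⟫ = (1 - t) * ⟪gradφ z, x - xs⟫ := by
        rw [hx2z, real_inner_smul_right]
      have hφz : φ z ≤ (1 - t) * φ xs + t * φ x - σ / 2 * (t * (1 - t)) * ‖x - xs‖ ^ 2 := by
        rw [hi1, hn1] at h1
        rw [hi2, hn2] at h2
        nlinarith [h1, h2, sq_nonneg (‖x - xs‖)]
      rw [hV z y, hig, hiy] at hm
      rw [hV xs y] at hm
      rw [hV x y, hV xs y]
      nlinarith [hm, hφz, ht0, mul_pos ht0 (sub_pos.mpr ht1)]
    linarith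
  have k1 := key g₁ x₁ hx₁ hmin₁ x₂ hx₂
  have k2 := key g₂ x₂ hx₂ hmin₂ x₁ hx₁
  rw [hV x₁ y, hV x₂ y] at k1 k2
  have hnn : ‖x₁ - x₂‖ = ‖x₂ - x₁‖ := norm_sub_rev _ _
  have hsum : σ * ‖x₂ - x₁‖ ^ 2 ≤ α * (⟪g₁, x₂⟫ - ⟪g₁, x₁⟫ + ⟪g₂, x₁⟫ - ⟪g₂, x₂⟫) := by
    rw [hnn] at k2
    nlinarith [k1, k2]
  have hinner : ⟪g₁, x₂⟫ - ⟪g₁, x₁⟫ + ⟪g₂, x₁⟫ - ⟪g₂, x₂⟫ = ⟪g₁ - g₂, x₂ - x₁⟫ := by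
    rw [inner_sub_left, inner_sub_right, inner_sub_right]; ring
  have hcs : ⟪g₁ - g₂, x₂ - x₁⟫ ≤ ‖g₂ - g₁‖ * ‖x₂ - x₁‖ := by
    calc ⟪g₁ - g₂, x₂ - x₁⟫ ≤ ‖g₁ - g₂‖ * ‖x₂ - x₁‖ := real_inner_le_norm _ _
    _ = ‖g₂ - g₁‖ * ‖x₂ - x₁‖ := by rw [norm_sub_rev]
  have hfinal : σ * ‖x₂ - x₁‖ ^ 2 ≤ α * (‖g₂ - g₁‖ * ‖x₂ - x₁‖) := by
    calc σ * ‖x₂ - x₁‖ ^ 2 ≤ α * ⟪g₁ - g₂, x₂ - x₁⟫ := by rw [← hinner]; exact hsum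
    _ ≤ α * (‖g₂ - g₁‖ * ‖x₂ - x₁‖) := by
        exact mul_le_mul_of_nonneg_left hcs (le_of_lt hα)
  rcases eq_or_lt_of_le (norm_nonneg (x₂ - x₁)) with h0 | h0
  · rw [← h0]; positivity
  · rw [div_mul_eq_mul_div, le_div_iff₀ hσ]
    nlinarith [hfinal]
end

section
/- Let α > 0, β ∈ (0,1), y ∈ X, and g ∈ ℝ^n with ‖g‖ ≤ G. Let z be a minimizer over X of x ↦ ⟨g, x⟩ + V_φ(x, y)/(α(1−β)) and let x⁺ be a minimizer over X of x ↦ ⟨g, x⟩ + V_φ(x, y)/α. Then ‖x⁺ − z‖ ≤ Gαβ/σ_φ; in particular, for every coordinate j ∈ {1,…,n}, |[x⁺]_j − [z]_j| ≤ Gαβ/σ_φ, i.e., x⁺ lies in the box [z − d, z + d] where d ∈ ℝ^n is the vector with every entry equal to Gαβ/σ_φ. (This is the statement that the state x_i(t) produced by Algorithm 1 always falls inside the quantization interval [z_i(t) − d(t), z_i(t) + d(t)].) -/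
open scoped RealInnerProductSpace BigOperators

private lemma coord_abs_le_norm {n : ℕ} (v : EuclideanSpace ℝ (Fin n)) (j : Fin n) :
    |v j| ≤ ‖v‖ := by
  rw [EuclideanSpace.norm_eq]
  calc |v j| = Real.sqrt (‖v j‖ ^ 2) := by
        rw [Real.norm_eq_abs, Real.sqrt_sq_eq_abs, abs_abs]
    _ ≤ Real.sqrt (∑ i, ‖v i‖ ^ 2) :=
        Real.sqrt_le_sqrt (Finset.single_le_sum (f := fun i => ‖v i‖ ^ 2)
          (fun i _ => sq_nonneg _) (Finset.mem_univ j))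

/-- A strongly convex function attains a quadratic growth bound at its minimizer
over a convex set. -/
private lemma strong_min {E : Type*} [NormedAddCommGroup E] [InnerProductSpace ℝ E]
    (X : Set E) (hXconvex : Convex ℝ X) (σ : ℝ) (hσ : 0 < σ)
    (f : E → ℝ)
    (hsc : ∀ a ∈ X, ∀ b ∈ X, ∀ t : ℝ, 0 < t → t < 1 →
      f ((1 - t) • a + t • b) ≤ (1 - t) * f a + t * f b - σ / 2 * t * (1 - t) * ‖b - a‖ ^ 2)
    (xs : E) (hxs : xs ∈ X) (hmin : ∀ x ∈ X, f xs ≤ f x) :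
    ∀ x ∈ X, f xs + σ / 2 * ‖x - xs‖ ^ 2 ≤ f x := by
  intro x hx
  set c : ℝ := σ / 2 * ‖x - xs‖ ^ 2 with hc
  have hc0 : 0 ≤ c := by positivity
  have key : ∀ t : ℝ, 0 < t → t < 1 → (1 - t) * c ≤ f x - f xs := by
    intro t ht0 ht1
    have hm : (1 - t) • xs + t • x ∈ X :=
      hXconvex hxs hx (by linarith) ht0.le (by ring)
    have h1 := hmin _ hm
    have h2 := hsc xs hxs x hx t ht0 ht1
    have h3 : t * ((1 - t) * (σ / 2 * ‖x - xs‖ ^ 2)) ≤ t * (f x - f xs) := by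
      nlinarith [h1, h2]
    have h4 := le_of_mul_le_mul_left h3 ht0
    rw [hc]
    linarith
  have hfinal : c ≤ f x - f xs := by
    refine le_of_forall_pos_le_add (fun ε hε => ?_)
    have ht0 : (0 : ℝ) < min (1/2) (ε / (c + 1)) := by positivity
    have ht1 : min (1/2) (ε / (c + 1)) < 1 :=
      lt_of_le_of_lt (min_le_left _ _) (by norm_num)
    have h := key _ ht0 ht1
    have htc : min (1/2) (ε / (c + 1)) * c ≤ ε := by
      have h1 : min (1/2) (ε / (c + 1)) ≤ ε / (c + 1) := min_le_right _ _
      have h2 : min (1/2) (ε / (c + 1)) * c ≤ (ε / (c + 1)) * c :=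
        mul_le_mul_of_nonneg_right h1 hc0
      have h3 : (ε / (c + 1)) * c ≤ ε := by
        rw [div_mul_eq_mul_div, div_le_iff₀ (by linarith)]
        nlinarith
      linarith
    nlinarith [h, htc]
  linarith

set_option maxHeartbeats 1600000 in
/-- Lemma 3: the state `x⁺` produced by Algorithm 1 falls inside the
quantization box `[z - d, z + d]` with `d = (Gαβ/σ_φ)·𝟏`. -/
theorem state_in_quantization_interval
    {n : ℕ} (X : Set (EuclideanSpace ℝ (Fin n)))
    (hXne : X.Nonempty) (hXcompact : IsCompact X) (hXconvex : Convex ℝ X)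
    (φ : EuclideanSpace ℝ (Fin n) → ℝ)
    (gradφ : EuclideanSpace ℝ (Fin n) → EuclideanSpace ℝ (Fin n))
    (hφC1 : ContDiff ℝ 1 φ)
    (hgrad : ∀ x, HasGradientAt φ (gradφ x) x)
    (σ : ℝ) (hσ : 0 < σ)
    (hstrong : ∀ a b, φ b ≥ φ a + ⟪gradφ a, b - a⟫ + σ / 2 * ‖b - a‖ ^ 2)
    (V : EuclideanSpace ℝ (Fin n) → EuclideanSpace ℝ (Fin n) → ℝ)
    (hV : ∀ a b, V a b = φ a - φ b - ⟪gradφ b, a - b⟫)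
    (G : ℝ) (hG : 0 < G)
    (α β : ℝ) (hα : 0 < α) (hβ : β ∈ Set.Ioo (0 : ℝ) 1)
    (y : EuclideanSpace ℝ (Fin n)) (hy : y ∈ X)
    (g : EuclideanSpace ℝ (Fin n)) (hg : ‖g‖ ≤ G)
    (z xplus : EuclideanSpace ℝ (Fin n)) (hz : z ∈ X) (hxplus : xplus ∈ X)
    (hminz : ∀ x ∈ X, ⟪g, z⟫ + V z y / (α * (1 - β)) ≤ ⟪g, x⟫ + V x y / (α * (1 - β)))
    (hminx : ∀ x ∈ X, ⟪g, xplus⟫ + V xplus y / α ≤ ⟪g, x⟫ + V x y / α) :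
    ‖xplus - z‖ ≤ G * α * β / σ ∧
      ∀ j : Fin n, |xplus j - z j| ≤ G * α * β / σ := by
  obtain ⟨hβ0, hβ1⟩ := hβ
  have hc1 : (0 : ℝ) < α * (1 - β) := by nlinarith
  -- scaled objectives
  set f₁ : EuclideanSpace ℝ (Fin n) → ℝ := fun x => (α * (1 - β)) * ⟪g, x⟫ + V x y with hf₁
  set f₂ : EuclideanSpace ℝ (Fin n) → ℝ := fun x => α * ⟪g, x⟫ + V x y with hf₂
  have hminz' : ∀ x ∈ X, f₁ z ≤ f₁ x := by
    intro x hx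
    have h := hminz x hx
    have h2 := mul_le_mul_of_nonneg_left h hc1.le
    have e1 : (α * (1 - β)) * (V z y / (α * (1 - β))) = V z y := by field_simp
    have e2 : (α * (1 - β)) * (V x y / (α * (1 - β))) = V x y := by field_simp
    rw [mul_add, mul_add, e1, e2] at h2
    simp only [hf₁]
    linarith
  have hminx' : ∀ x ∈ X, f₂ xplus ≤ f₂ x := by
    intro x hx
    have h := hminx x hx
    have h2 := mul_le_mul_of_nonneg_left h hα.le
    have e1 : α * (V xplus y / α) = V xplus y := by field_simp
    have e2 : α * (V x y / α) = V x y := by field_simp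
    rw [mul_add, mul_add, e1, e2] at h2
    simp only [hf₂]
    linarith
  -- strong convexity of both objectives
  have hsc : ∀ cg : ℝ, ∀ a ∈ X, ∀ b ∈ X, ∀ t : ℝ, 0 < t → t < 1 →
      (cg * ⟪g, (1 - t) • a + t • b⟫ + V ((1 - t) • a + t • b) y) ≤
        (1 - t) * (cg * ⟪g, a⟫ + V a y) + t * (cg * ⟪g, b⟫ + V b y)
          - σ / 2 * t * (1 - t) * ‖b - a‖ ^ 2 := by
    intro cg a _ b _ t ht0 ht1
    set m : EuclideanSpace ℝ (Fin n) := (1 - t) • a + t • b with hm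
    have hma : a - m = t • (a - b) := by
      rw [hm]; module
    have hmb : b - m = (1 - t) • (b - a) := by
      rw [hm]; module
    have hna : ‖a - m‖ ^ 2 = t ^ 2 * ‖b - a‖ ^ 2 := by
      rw [hma, norm_smul, Real.norm_eq_abs, abs_of_pos ht0, mul_pow, norm_sub_rev]
    have hnb : ‖b - m‖ ^ 2 = (1 - t) ^ 2 * ‖b - a‖ ^ 2 := by
      rw [hmb, norm_smul, Real.norm_eq_abs, abs_of_pos (by linarith), mul_pow]
    have h1 := hstrong m a
    have h2 := hstrong m b
    rw [hna] at h1
    rw [hnb] at h2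
    have hzero : (1 - t) * ⟪gradφ m, a - m⟫ + t * ⟪gradφ m, b - m⟫ = 0 := by
      rw [← real_inner_smul_right, ← real_inner_smul_right, ← inner_add_right]
      have : (1 - t) • (a - m) + t • (b - m) = 0 := by rw [hm]; module
      rw [this, inner_zero_right]
    have hφm : φ m ≤ (1 - t) * φ a + t * φ b - σ / 2 * t * (1 - t) * ‖b - a‖ ^ 2 := by
      nlinarith [mul_le_mul_of_nonneg_left h1.le (show (0:ℝ) ≤ 1 - t by linarith),
        mul_le_mul_of_nonneg_left h2.le ht0.le, hzero]
    have hlin : ⟪g, m⟫ = (1 - t) * ⟪g, a⟫ + t * ⟪g, b⟫ := by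
      rw [hm, inner_add_right, real_inner_smul_right, real_inner_smul_right]
    have hlin2 : ⟪gradφ y, m - y⟫ = (1 - t) * ⟪gradφ y, a - y⟫ + t * ⟪gradφ y, b - y⟫ := by
      rw [← real_inner_smul_right, ← real_inner_smul_right, ← inner_add_right]
      congr 1
      rw [hm]; module
    rw [hV, hV, hV, hlin, hlin2]
    nlinarith [hφm]
  have hq1 : f₁ xplus ≥ f₁ z + σ / 2 * ‖xplus - z‖ ^ 2 :=
    strong_min X hXconvex σ hσ f₁ (fun a ha b hb t ht0 ht1 => hsc _ a ha b hb t ht0 ht1)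
      z hz hminz' xplus hxplus
  have hq2 : f₂ z ≥ f₂ xplus + σ / 2 * ‖z - xplus‖ ^ 2 :=
    strong_min X hXconvex σ hσ f₂ (fun a ha b hb t ht0 ht1 => hsc _ a ha b hb t ht0 ht1)
      xplus hxplus hminx' z hz
  rw [norm_sub_rev z xplus] at hq2
  -- combine
  have hdiff : f₁ xplus - f₁ z + (f₂ z - f₂ xplus) = α * β * ⟪g, z - xplus⟫ := by
    simp only [hf₁, hf₂, inner_sub_right]
    ring
  have hCS : ⟪g, z - xplus⟫ ≤ G * ‖xplus - z‖ := by
    calc ⟪g, z - xplus⟫ ≤ ‖g‖ * ‖z - xplus‖ := real_inner_le_norm g _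
      _ ≤ G * ‖xplus - z‖ := by
          rw [norm_sub_rev z xplus]
          exact mul_le_mul_of_nonneg_right hg (norm_nonneg _)
  have hmain : σ * ‖xplus - z‖ ^ 2 ≤ α * β * (G * ‖xplus - z‖) := by
    have hab : 0 ≤ α * β := by positivity
    have hgsub : ⟪g, z - xplus⟫ = ⟪g, z⟫ - ⟪g, xplus⟫ := inner_sub_right _ _ _
    simp only [hf₁, hf₂] at hq1 hq2
    nlinarith [hq1, hq2, mul_le_mul_of_nonneg_left hCS hab, hgsub]
  have hnorm : ‖xplus - z‖ ≤ G * α * β / σ := by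
    rcases eq_or_lt_of_le (norm_nonneg (xplus - z)) with h0 | h0
    · rw [← h0]; positivity
    · rw [le_div_iff₀ hσ]
      have := mul_le_mul_of_nonneg_right hmain (le_of_lt (inv_pos.mpr h0))
      nlinarith [hmain, h0]
  refine ⟨hnorm, fun j => ?_⟩
  calc |xplus j - z j| = |(xplus - z) j| := by simp
    _ ≤ ‖xplus - z‖ := coord_abs_le_norm _ j
    _ ≤ G * α * β / σ := hnorm
end

section
/- Let α > 0, ỹ ∈ X, x* ∈ X, and g ∈ ℝ^n with ‖g‖ ≤ G. Let x⁺ be a minimizer over X of x ↦ α⟨g, x⟩ + V_φ(x, ỹ) (i.e., x⁺ ∈ X and α⟨g, x⁺⟩ + V_φ(x⁺, ỹ) ≤ α⟨g, x⟩ + V_φ(x, ỹ) for all x ∈ X). Then ⟨g, ỹ − x*⟩ ≤ (1/α)·(V_φ(x*, ỹ) − V_φ(x*, x⁺)) + G²α/(2σ_φ). -/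
/-!
The minimizer `x⁺` satisfies the first-order condition `⟪α g + ∇φ x⁺ - ∇φ ỹ, x* - x⁺⟫ ≥ 0` on
the convex set `X`. By the three-point identity for Bregman divergences the gradient part of this
equals `V(x*, ỹ) - V(x*, x⁺) - V(x⁺, ỹ)`, which leaves `α ⟪g, ỹ - x⁺⟫ - V(x⁺, ỹ)` to bound.
Strong convexity gives `V(x⁺, ỹ) ≥ σ/2 ‖x⁺ - ỹ‖²`, and Young's inequality then bounds the rest
by `α² G² / (2σ)`.
-/

open scoped RealInnerProductSpace

open InnerProductSpace

section Bregman

variable {E : Type*} [NormedAddCommGroup E] [InnerProductSpace ℝ E]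

theorem real_inner_le_sq_norm_div_add {u v : E} {σ : ℝ} (hσ : 0 < σ) :
    ⟪u, v⟫ ≤ ‖u‖ ^ 2 / (2 * σ) + σ / 2 * ‖v‖ ^ 2 := by
  have hscaled : 2 * σ * ⟪u, v⟫ ≤ ‖u‖ ^ 2 + σ ^ 2 * ‖v‖ ^ 2 := by
    nlinarith [real_inner_le_norm u v, sq_nonneg (‖u‖ - σ * ‖v‖)]
  rw [div_add' _ _ _ (by positivity), le_div_iff₀ (by positivity)]
  nlinarith

theorem IsMinOn.inner_gradient_nonneg [CompleteSpace E] {f : E → ℝ} {s : Set E} {x y f' : E}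
    (hs : Convex ℝ s) (hmin : IsMinOn f s x) (hf : HasGradientAt f f' x) (hx : x ∈ s)
    (hy : y ∈ s) : 0 ≤ ⟪f', y - x⟫ := by
  simpa using hmin.localize.hasFDerivWithinAt_nonneg hf.hasFDerivAt.hasFDerivWithinAt
    (sub_mem_posTangentConeAt_of_segment_subset (hs.segment_subset hx hy))

def bregmanDiv (φ : E → ℝ) (gradφ : E → E) (a b : E) : ℝ :=
  φ a - φ b - ⟪gradφ b, a - b⟫

variable {φ : E → ℝ} {gradφ : E → E}

theorem bregmanDiv_three_point (a b c : E) :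
    bregmanDiv φ gradφ c a - bregmanDiv φ gradφ c b - bregmanDiv φ gradφ b a =
      ⟪gradφ b - gradφ a, c - b⟫ := by
  simp only [bregmanDiv, inner_sub_left, inner_sub_right]
  ring

theorem sq_norm_sub_le_bregmanDiv {σ : ℝ}
    (hstrong : ∀ a b, φ b ≥ φ a + ⟪gradφ a, b - a⟫ + σ / 2 * ‖b - a‖ ^ 2) (a b : E) :
    σ / 2 * ‖a - b‖ ^ 2 ≤ bregmanDiv φ gradφ a b := by
  have := hstrong b a
  rw [bregmanDiv]
  linarith

theorem hasGradientAt_inner_add_bregmanDiv [CompleteSpace E] {x : E}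
    (hφ : HasGradientAt φ (gradφ x) x) (r : ℝ) (c b : E) :
    HasGradientAt (fun a => r * ⟪c, a⟫ + bregmanDiv φ gradφ a b)
      (r • c + (gradφ x - gradφ b)) x := by
  have hlin := fun c : E => (toDual ℝ E c).hasFDerivAt (x := x)
  have h := ((hlin c).const_mul r).add ((hφ.hasFDerivAt.sub_const (φ b)).sub
    ((hlin (gradφ b)).sub_const ⟪gradφ b, b⟫))
  rw [hasGradientAt_iff_hasFDerivAt]
  refine (h.congr_fderiv ?_).congr_of_eventuallyEq (.of_forall fun a => ?_)
  · ext a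
    simp
  · simp [bregmanDiv, inner_sub_right]

end Bregman

theorem mirror_descent_step_inequality_general
    {n : ℕ} (X : Set (EuclideanSpace ℝ (Fin n)))
    (hXconvex : Convex ℝ X)
    (φ : EuclideanSpace ℝ (Fin n) → ℝ)
    (gradφ : EuclideanSpace ℝ (Fin n) → EuclideanSpace ℝ (Fin n))
    (hgrad : ∀ x, HasGradientAt φ (gradφ x) x)
    (σ : ℝ) (hσ : 0 < σ)
    (hstrong : ∀ a b, φ b ≥ φ a + ⟪gradφ a, b - a⟫ + σ / 2 * ‖b - a‖ ^ 2)
    (V : EuclideanSpace ℝ (Fin n) → EuclideanSpace ℝ (Fin n) → ℝ)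
    (hV : ∀ a b, V a b = φ a - φ b - ⟪gradφ b, a - b⟫)
    (G : ℝ)
    (α : ℝ) (hα : 0 < α)
    (ytilde xstar : EuclideanSpace ℝ (Fin n)) (hxstar : xstar ∈ X)
    (g : EuclideanSpace ℝ (Fin n)) (hg : ‖g‖ ≤ G)
    (xplus : EuclideanSpace ℝ (Fin n)) (hxp : xplus ∈ X)
    (hmin : ∀ x ∈ X, α * ⟪g, xplus⟫ + V xplus ytilde ≤ α * ⟪g, x⟫ + V x ytilde) :
    ⟪g, ytilde - xstar⟫ ≤
      1 / α * (V xstar ytilde - V xstar xplus) + G ^ 2 * α / (2 * σ) := by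
  obtain rfl : V = bregmanDiv φ gradφ := funext₂ hV
  have hopt : 0 ≤ ⟪α • g + (gradφ xplus - gradφ ytilde), xstar - xplus⟫ :=
    IsMinOn.inner_gradient_nonneg hXconvex (isMinOn_iff.mpr hmin)
      (hasGradientAt_inner_add_bregmanDiv (hgrad xplus) α g ytilde) hxp hxstar
  have hthree := bregmanDiv_three_point (φ := φ) (gradφ := gradφ) ytilde xplus xstar
  have hdist := sq_norm_sub_le_bregmanDiv hstrong xplus ytilde
  have hyoung := real_inner_le_sq_norm_div_add (u := α • g) (v := ytilde - xplus) hσ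
  have hαg : ‖α • g‖ ^ 2 / (2 * σ) ≤ G ^ 2 * α / (2 * σ) * α := by
    rw [div_mul_eq_mul_div, norm_smul, Real.norm_of_nonneg hα.le]
    gcongr
    nlinarith [pow_le_pow_left₀ (norm_nonneg g) hg 2, sq_nonneg α]
  have hsplit : ⟪g, ytilde - xstar⟫ = ⟪g, ytilde - xplus⟫ - ⟪g, xstar - xplus⟫ := by
    rw [← inner_sub_right, sub_sub_sub_cancel_right]
  rw [inner_add_left, real_inner_smul_left] at hopt
  rw [real_inner_smul_left, norm_sub_rev] at hyoung
  rw [one_div_mul_eq_div, div_add' _ _ _ (by positivity), le_div_iff₀ hα, hsplit]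
  linarith

/-- Lemma 8: the basic mirror-descent inequality for one step of Algorithm 1. -/
theorem mirror_descent_step_inequality
    {n : ℕ} (X : Set (EuclideanSpace ℝ (Fin n)))
    (hXne : X.Nonempty) (hXcompact : IsCompact X) (hXconvex : Convex ℝ X)
    (φ : EuclideanSpace ℝ (Fin n) → ℝ)
    (gradφ : EuclideanSpace ℝ (Fin n) → EuclideanSpace ℝ (Fin n))
    (hφC1 : ContDiff ℝ 1 φ)
    (hgrad : ∀ x, HasGradientAt φ (gradφ x) x)
    (σ : ℝ) (hσ : 0 < σ)
    (hstrong : ∀ a b, φ b ≥ φ a + ⟪gradφ a, b - a⟫ + σ / 2 * ‖b - a‖ ^ 2)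
    (V : EuclideanSpace ℝ (Fin n) → EuclideanSpace ℝ (Fin n) → ℝ)
    (hV : ∀ a b, V a b = φ a - φ b - ⟪gradφ b, a - b⟫)
    (G : ℝ) (hG : 0 < G)
    (α : ℝ) (hα : 0 < α)
    (ytilde xstar : EuclideanSpace ℝ (Fin n)) (hyt : ytilde ∈ X) (hxstar : xstar ∈ X)
    (g : EuclideanSpace ℝ (Fin n)) (hg : ‖g‖ ≤ G)
    (xplus : EuclideanSpace ℝ (Fin n)) (hxp : xplus ∈ X)
    (hmin : ∀ x ∈ X, α * ⟪g, xplus⟫ + V xplus ytilde ≤ α * ⟪g, x⟫ + V x ytilde) :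
    ⟪g, ytilde - xstar⟫ ≤
      1 / α * (V xstar ytilde - V xstar xplus) + G ^ 2 * α / (2 * σ) :=
  mirror_descent_step_inequality_general X hXconvex φ gradφ hgrad σ hσ hstrong V hV G α hα ytilde
    xstar hxstar g hg xplus hxp hmin
end

section
/- Fix integers N ≥ 1 and T ≥ 1, constants G > 0, σ_φ > 0, ω > 0, γ ∈ (0,1), and nonincreasing nonnegative sequences α, E : ℕ → ℝ. For each t ≥ 0 let P(t) be an N×N doubly stochastic matrix with nonnegative entries, and for 0 ≤ s ≤ t define the transition matrices P(t, s) = P(t)P(t−1)⋯P(s), with P(t, t+1) = I_N; assume |[P(m, s)]_{ij} − 1/N| ≤ ω·γ^{m−s} for all m ≥ s ≥ 0 and all i, j. Let d_j(s) ∈ ℝ^n (1 ≤ j ≤ N, s ≥ 0) satisfy ‖d_j(s)‖ ≤ Gα(s)/σ_φ + 3N·E(s), let x_j(0) ∈ ℝ^n be arbitrary, and define, for t ≥ 1, x_i(t) = Σ_{s=1}^{t} Σ_{j=1}^{N} [P(t−1, s)]_{ij} d_j(s−1) + Σ_{j=1}^{N} [P(t−1, 0)]_{ij} x_j(0), and x̄(t)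 = (1/N)Σ_{i=1}^{N} x_i(t). Then, with A = Σ_{j=1}^{N}‖x_j(0)‖ and B = 2N + N²ω/(1−γ): (i) Σ_{t=1}^{T} Σ_{i=1}^{N} ‖x_i(t) − x̄(t)‖ ≤ (Nω/(1−γ))·A + B·Σ_{t=0}^{T} (Gα(t)/σ_φ + 3N·E(t)); and (ii) for every j ∈ {1,…,N}, Σ_{t=1}^{T} Σ_{i=1}^{N} ‖x_i(t) − x_j(t)‖ ≤ (2Nω/(1−γ))·A + 2B·Σ_{t=0}^{T} (Gα(t)/σ_φ + 3N·E(t)). -/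
open scoped RealInnerProductSpace BigOperators

/-- The transition matrix `P(t, s) = P(t) * P(t-1) * ⋯ * P(s)` (equal to the
identity when `s = t + 1`). -/
def transMat {N : ℕ} (P : ℕ → Matrix (Fin N) (Fin N) ℝ) (t s : ℕ) :
    Matrix (Fin N) (Fin N) ℝ :=
  ((List.range (t + 1 - s)).map fun k => P (t - k)).prod

/-!
Every transition matrix is column stochastic, so the average `x̄(t)` is `1/N` times the plain
sum of all increments and initial values, and `x_i(t) - x̄(t)` is the defining expression of
`x_i(t)` with every coefficient `P(t-1, s)_ij` replaced by `P(t-1, s)_ij - 1/N`. These are at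
most `ω γ^(t-1-s)` in absolute value, except for `s = t`, where `P(t-1, t) = I` and
`∑_j |δ_ij - 1/N| ≤ 2`. Summed over `t`, each increment picks up a geometric series of total
weight at most `1/(1-γ)`. The pairwise bound follows by the triangle inequality through `x̄(t)`.
-/

open Finset Matrix

lemma transMat_of_lt {N : ℕ} (P : ℕ → Matrix (Fin N) (Fin N) ℝ) {t s : ℕ} (h : t < s) :
    transMat P t s = 1 := by
  simp [transMat, Nat.sub_eq_zero_of_le h]

lemma transMat_mem_colStochastic {N : ℕ} {P : ℕ → Matrix (Fin N) (Fin N) ℝ}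
    (hP : ∀ t, P t ∈ colStochastic ℝ (Fin N)) (t s : ℕ) :
    transMat P t s ∈ colStochastic ℝ (Fin N) :=
  (colStochastic ℝ (Fin N)).list_prod_mem (by simp [hP])

lemma sum_Icc_one_eq_sum_range {M : Type*} [AddCommMonoid M] (f : ℕ → M) (n : ℕ) :
    ∑ s ∈ Icc 1 n, f s = ∑ r ∈ range n, f (r + 1) := by
  rw [Finset.range_eq_Ico, Finset.sum_Ico_add', ← Finset.Ico_add_one_right_eq_Icc, zero_add]

lemma geom_sum_le_inv_one_sub {γ : ℝ} (hγ0 : 0 ≤ γ) (hγ1 : γ < 1) (n : ℕ) :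
    ∑ k ∈ range n, γ ^ k ≤ (1 - γ)⁻¹ := by
  have := geom_sum_Ico_le_of_lt_one (m := 0) (n := n) hγ0 hγ1
  rwa [pow_zero, one_div, ← Finset.range_eq_Ico] at this

lemma sum_range_sum_range_pow_mul_le {γ : ℝ} (hγ0 : 0 ≤ γ) (hγ1 : γ < 1) {D : ℕ → ℝ}
    (hD : ∀ r, 0 ≤ D r) (T : ℕ) :
    ∑ u ∈ range T, ∑ r ∈ range u, γ ^ (u - (r + 1)) * D r ≤
      (1 - γ)⁻¹ * ∑ r ∈ range T, D r := by
  have hswap : ∑ u ∈ range T, ∑ r ∈ range u, γ ^ (u - (r + 1)) * D r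
      = ∑ r ∈ range T, (∑ k ∈ range (T - (r + 1)), γ ^ k) * D r := by
    rw [sum_comm' (t' := range T) (s' := fun r => Ico (r + 1) T)
      (by intro u r; simp only [mem_range, mem_Ico]; omega)]
    refine sum_congr rfl fun r _ => ?_
    rw [← sum_mul, sum_Ico_eq_sum_range]
    exact congrArg (· * D r) (sum_congr rfl fun k _ => by congr 1; omega)
  rw [hswap, mul_sum]
  exact sum_le_sum fun r _ =>
    mul_le_mul_of_nonneg_right (geom_sum_le_inv_one_sub hγ0 hγ1 _) (hD r)

section
variable {ι E : Type*} [Fintype ι] [SeminormedAddCommGroup E]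

lemma sum_norm_sub_le_of_norm_sub_le (y : ι → E) (c : E) {b : ℝ} (h : ∀ i, ‖y i - c‖ ≤ b)
    (j : ι) : ∑ i, ‖y i - y j‖ ≤ Fintype.card ι * (2 * b) := by
  have := sum_le_card_nsmul univ (fun i => ‖y i - y j‖) (2 * b) fun i _ =>
    calc ‖y i - y j‖ ≤ ‖y i - c‖ + ‖y j - c‖ := by
          simpa only [dist_eq_norm] using dist_triangle_right (y i) (y j) c
      _ ≤ 2 * b := by linarith [h i, h j]
  simpa using this

variable [NormedSpace ℝ E]

lemma norm_sum_smul_le (a : ι → ℝ) (v : ι → E) :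
    ‖∑ j, a j • v j‖ ≤ ∑ j, |a j| * ‖v j‖ :=
  (norm_sum_le _ _).trans_eq (by simp [norm_smul])

lemma sum_sum_smul_of_mem_colStochastic [DecidableEq ι] {M : Matrix ι ι ℝ}
    (hM : M ∈ colStochastic ℝ ι) (v : ι → E) :
    ∑ i, ∑ j, M i j • v j = ∑ j, v j := by
  rw [sum_comm]
  simp [← sum_smul, sum_col_of_mem_colStochastic hM]

end

lemma sum_abs_one_apply_sub_one_div_le_two {N : ℕ} (i : Fin N) :
    ∑ j, |(1 : Matrix (Fin N) (Fin N) ℝ) i j - 1 / N| ≤ 2 := by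
  have hN : (N : ℝ) ≠ 0 := by have := i.pos; positivity
  calc ∑ j, |(1 : Matrix (Fin N) (Fin N) ℝ) i j - 1 / N|
      ≤ ∑ j, ((1 : Matrix (Fin N) (Fin N) ℝ) i j + 1 / N) := sum_le_sum fun j _ =>
        (abs_sub _ _).trans_eq
          (by rw [abs_of_nonneg (zero_le_one_elem i j), abs_of_nonneg (by positivity)])
    _ = 2 := by simp [sum_add_distrib, one_apply, hN]; norm_num

def deviationBound (N : ℕ) (ω γ A : ℝ) (D : ℕ → ℝ) (u : ℕ) : ℝ :=
  ω * γ ^ u * A + N * ω * ∑ r ∈ range u, γ ^ (u - (r + 1)) * D r + 2 * D u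

lemma sum_range_deviationBound_le {ω γ A : ℝ} (hω : 0 ≤ ω) (hγ0 : 0 ≤ γ) (hγ1 : γ < 1)
    (hA : 0 ≤ A) {D : ℕ → ℝ} (hD : ∀ s, 0 ≤ D s) (N T : ℕ) :
    ∑ u ∈ range T, deviationBound N ω γ A D u ≤
      ω / (1 - γ) * A + (2 + N * ω / (1 - γ)) * ∑ t ∈ range (T + 1), D t := by
  have hS : ∑ t ∈ range T, D t ≤ ∑ t ∈ range (T + 1), D t := by
    rw [sum_range_succ]; linarith [hD T]
  have hS0 : 0 ≤ ∑ t ∈ range T, D t := sum_nonneg fun t _ => hD t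
  simp only [deviationBound, sum_add_distrib, ← mul_sum, ← sum_mul]
  calc ω * (∑ u ∈ range T, γ ^ u) * A
        + N * ω * ∑ u ∈ range T, ∑ r ∈ range u, γ ^ (u - (r + 1)) * D r
        + 2 * ∑ u ∈ range T, D u
      ≤ ω * (1 - γ)⁻¹ * A + N * ω * ((1 - γ)⁻¹ * ∑ t ∈ range T, D t)
        + 2 * ∑ t ∈ range T, D t := by
        gcongr
        · exact geom_sum_le_inv_one_sub hγ0 hγ1 T
        · exact sum_range_sum_range_pow_mul_le hγ0 hγ1 hD T
    _ ≤ ω * (1 - γ)⁻¹ * A + N * ω * ((1 - γ)⁻¹ * ∑ t ∈ range (T + 1), D t)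
        + 2 * ∑ t ∈ range (T + 1), D t := by
        have : 0 ≤ (1 - γ)⁻¹ := inv_nonneg.2 (by linarith)
        gcongr
    _ = _ := by ring

section Consensus
variable {E : Type*} [NormedAddCommGroup E] [NormedSpace ℝ E] {N : ℕ}
  {P : ℕ → Matrix (Fin N) (Fin N) ℝ} {d x : Fin N → ℕ → E}

lemma iterate_sub_mean_eq (hP : ∀ t, P t ∈ colStochastic ℝ (Fin N))
    (hx : ∀ i : Fin N, ∀ t : ℕ, 1 ≤ t →
      x i t = (∑ s ∈ Icc 1 t, ∑ j, transMat P (t - 1) s i j • d j (s - 1))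
        + ∑ j, transMat P (t - 1) 0 i j • x j 0)
    {t : ℕ} (ht : 1 ≤ t) (i : Fin N) :
    x i t - (1 / (N : ℝ)) • ∑ k, x k t =
      (∑ s ∈ Icc 1 t, ∑ j, (transMat P (t - 1) s i j - 1 / N) • d j (s - 1))
        + ∑ j, (transMat P (t - 1) 0 i j - 1 / N) • x j 0 := by
  have hsum : ∑ k, x k t = ∑ s ∈ Icc 1 t, ∑ j, d j (s - 1) + ∑ j, x j 0 := by
    simp only [hx _ t ht, sum_add_distrib]
    rw [sum_comm]
    simp only [sum_sum_smul_of_mem_colStochastic (transMat_mem_colStochastic hP _ _)]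
  rw [hsum, hx i t ht]
  simp only [sub_smul, sum_sub_distrib, smul_add, smul_sum]
  abel

lemma norm_iterate_sub_mean_le {ω γ : ℝ} {D : ℕ → ℝ}
    (hP : ∀ t, P t ∈ colStochastic ℝ (Fin N))
    (hdecay : ∀ m s : ℕ, s ≤ m → ∀ i j,
      |transMat P m s i j - 1 / N| ≤ ω * γ ^ (m - s))
    (hd : ∀ j s, ‖d j s‖ ≤ D s)
    (hx : ∀ i : Fin N, ∀ t : ℕ, 1 ≤ t →
      x i t = (∑ s ∈ Icc 1 t, ∑ j, transMat P (t - 1) s i j • d j (s - 1))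
        + ∑ j, transMat P (t - 1) 0 i j • x j 0)
    (u : ℕ) (i : Fin N) :
    ‖x i (u + 1) - (1 / (N : ℝ)) • ∑ k, x k (u + 1)‖ ≤
      deviationBound N ω γ (∑ j, ‖x j 0‖) D u := by
  rw [iterate_sub_mean_eq hP hx (Nat.le_add_left 1 u) i, sum_Icc_one_eq_sum_range,
    sum_range_succ]
  simp only [Nat.add_sub_cancel, transMat_of_lt P (lt_add_one u)]
  have hdecayed : ‖∑ r ∈ range u, ∑ j, (transMat P u (r + 1) i j - 1 / N) • d j r‖ ≤
      N * ω * ∑ r ∈ range u, γ ^ (u - (r + 1)) * D r := by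
    rw [mul_sum]
    refine (norm_sum_le _ _).trans (sum_le_sum fun r hr => (norm_sum_smul_le _ _).trans ?_)
    have hru : r + 1 ≤ u := mem_range.1 hr
    simpa [mul_assoc] using sum_le_card_nsmul univ _ (ω * γ ^ (u - (r + 1)) * D r) fun j _ =>
      mul_le_mul (hdecay u (r + 1) hru i j) (hd j r) (norm_nonneg _)
        ((abs_nonneg _).trans (hdecay u (r + 1) hru i j))
  have htop : ‖∑ j, ((1 : Matrix (Fin N) (Fin N) ℝ) i j - 1 / N) • d j u‖ ≤ 2 * D u :=
    calc _ ≤ ∑ j, |(1 : Matrix (Fin N) (Fin N) ℝ) i j - 1 / N| * D u :=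
          (norm_sum_smul_le _ _).trans (sum_le_sum fun j _ =>
            mul_le_mul_of_nonneg_left (hd j u) (abs_nonneg _))
      _ ≤ 2 * D u := by
          rw [← sum_mul]
          exact mul_le_mul_of_nonneg_right (sum_abs_one_apply_sub_one_div_le_two i)
            ((norm_nonneg _).trans (hd i u))
  have hinit : ‖∑ j, (transMat P u 0 i j - 1 / N) • x j 0‖ ≤ ω * γ ^ u * ∑ j, ‖x j 0‖ := by
    rw [mul_sum]
    refine (norm_sum_smul_le _ _).trans (sum_le_sum fun j _ => ?_)
    simpa using mul_le_mul_of_nonneg_right (hdecay u 0 u.zero_le i j) (norm_nonneg (x j 0))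
  refine norm_add₃_le.trans ?_
  unfold deviationBound
  linarith

end Consensus

theorem consensus_bound_general
    {n : ℕ} (N T : ℕ) (hN : 1 ≤ N)
    (G σ ω : ℝ) (hω : 0 < ω)
    (γ : ℝ) (hγ : γ ∈ Set.Ioo (0 : ℝ) 1)
    (α E : ℕ → ℝ)
    (P : ℕ → Matrix (Fin N) (Fin N) ℝ)
    (hPnonneg : ∀ t i j, 0 ≤ P t i j)
    (hPcol : ∀ t j, ∑ i, P t i j = 1)
    (hPdecay : ∀ m s : ℕ, s ≤ m → ∀ i j,
      |transMat P m s i j - 1 / N| ≤ ω * γ ^ (m - s))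
    (d : Fin N → ℕ → EuclideanSpace ℝ (Fin n))
    (hd : ∀ j s, ‖d j s‖ ≤ G * α s / σ + 3 * N * E s)
    (x : Fin N → ℕ → EuclideanSpace ℝ (Fin n))
    (hx : ∀ i : Fin N, ∀ t : ℕ, 1 ≤ t →
      x i t = (∑ s ∈ Finset.Icc 1 t, ∑ j, transMat P (t - 1) s i j • d j (s - 1))
        + ∑ j, transMat P (t - 1) 0 i j • x j 0)
    (xbar : ℕ → EuclideanSpace ℝ (Fin n))
    (hxbar : ∀ t, xbar t = (1 / (N : ℝ)) • ∑ i, x i t)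
    (A B : ℝ)
    (hA : A = ∑ j, ‖x j 0‖)
    (hB : B = 2 * N + N ^ 2 * ω / (1 - γ)) :
    (∑ t ∈ Finset.Icc 1 T, ∑ i, ‖x i t - xbar t‖ ≤
        (N * ω / (1 - γ)) * A
          + B * ∑ t ∈ Finset.range (T + 1), (G * α t / σ + 3 * N * E t)) ∧
      ∀ j : Fin N,
        ∑ t ∈ Finset.Icc 1 T, ∑ i, ‖x i t - x j t‖ ≤
          (2 * N * ω / (1 - γ)) * A
            + 2 * B * ∑ t ∈ Finset.range (T + 1), (G * α t / σ + 3 * N * E t) := by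
  set D : ℕ → ℝ := fun s => G * α s / σ + 3 * N * E s
  have hP : ∀ t, P t ∈ colStochastic ℝ (Fin N) := fun t =>
    mem_colStochastic_iff_sum.2 ⟨hPnonneg t, hPcol t⟩
  have hD0 : ∀ s, 0 ≤ D s := fun s => (norm_nonneg _).trans (hd ⟨0, hN⟩ s)
  have hA0 : 0 ≤ A := hA ▸ sum_nonneg fun j _ => norm_nonneg (x j 0)
  have hdev : ∀ u i, ‖x i (u + 1) - xbar (u + 1)‖ ≤ deviationBound N ω γ A D u :=
    fun u i => by simpa only [hxbar, hA] using norm_iterate_sub_mean_le hP hPdecay hd hx u i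
  have hsum := sum_range_deviationBound_le hω.le hγ.1.le hγ.2 hA0 hD0 N T
  refine ⟨?_, fun j => ?_⟩
  · calc ∑ t ∈ Icc 1 T, ∑ i, ‖x i t - xbar t‖
        ≤ ∑ u ∈ range T, N * deviationBound N ω γ A D u := by
          rw [sum_Icc_one_eq_sum_range]
          exact sum_le_sum fun u _ => by
            simpa using sum_le_card_nsmul univ _ _ fun i _ => hdev u i
      _ ≤ N * (ω / (1 - γ) * A + (2 + N * ω / (1 - γ)) * ∑ t ∈ range (T + 1), D t) := by
          rw [← mul_sum]; gcongr
      _ = _ := by rw [hB]; ring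
  · calc ∑ t ∈ Icc 1 T, ∑ i, ‖x i t - x j t‖
        ≤ ∑ u ∈ range T, N * (2 * deviationBound N ω γ A D u) := by
          rw [sum_Icc_one_eq_sum_range]
          exact sum_le_sum fun u _ => by
            simpa using sum_norm_sub_le_of_norm_sub_le (x · (u + 1)) _ (hdev u) j
      _ ≤ N * (2 * (ω / (1 - γ) * A + (2 + N * ω / (1 - γ)) * ∑ t ∈ range (T + 1), D t)) := by
          rw [← mul_sum, ← mul_sum]; gcongr
      _ = _ := by rw [hB]; ring

/-- Lemma 13: consensus bound for the iterates of Algorithm 1. -/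
theorem consensus_bound
    {n : ℕ} (N T : ℕ) (hN : 1 ≤ N) (hT : 1 ≤ T)
    (G σ ω : ℝ) (hG : 0 < G) (hσ : 0 < σ) (hω : 0 < ω)
    (γ : ℝ) (hγ : γ ∈ Set.Ioo (0 : ℝ) 1)
    (α E : ℕ → ℝ) (hα0 : ∀ t, 0 ≤ α t) (hE0 : ∀ t, 0 ≤ E t)
    (hαmono : Antitone α) (hEmono : Antitone E)
    (P : ℕ → Matrix (Fin N) (Fin N) ℝ)
    (hPnonneg : ∀ t i j, 0 ≤ P t i j)
    (hProw : ∀ t i, ∑ j, P t i j = 1)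
    (hPcol : ∀ t j, ∑ i, P t i j = 1)
    (hPdecay : ∀ m s : ℕ, s ≤ m → ∀ i j,
      |transMat P m s i j - 1 / N| ≤ ω * γ ^ (m - s))
    (d : Fin N → ℕ → EuclideanSpace ℝ (Fin n))
    (hd : ∀ j s, ‖d j s‖ ≤ G * α s / σ + 3 * N * E s)
    (x : Fin N → ℕ → EuclideanSpace ℝ (Fin n))
    (hx : ∀ i : Fin N, ∀ t : ℕ, 1 ≤ t →
      x i t = (∑ s ∈ Finset.Icc 1 t, ∑ j, transMat P (t - 1) s i j • d j (s - 1))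
        + ∑ j, transMat P (t - 1) 0 i j • x j 0)
    (xbar : ℕ → EuclideanSpace ℝ (Fin n))
    (hxbar : ∀ t, xbar t = (1 / (N : ℝ)) • ∑ i, x i t)
    (A B : ℝ)
    (hA : A = ∑ j, ‖x j 0‖)
    (hB : B = 2 * N + N ^ 2 * ω / (1 - γ)) :
    (∑ t ∈ Finset.Icc 1 T, ∑ i, ‖x i t - xbar t‖ ≤
        (N * ω / (1 - γ)) * A
          + B * ∑ t ∈ Finset.range (T + 1), (G * α t / σ + 3 * N * E t)) ∧
      ∀ j : Fin N,
        ∑ t ∈ Finset.Icc 1 T, ∑ i, ‖x i t - x j t‖ ≤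
          (2 * N * ω / (1 - γ)) * A
            + 2 * B * ∑ t ∈ Finset.range (T + 1), (G * α t / σ + 3 * N * E t) :=
  consensus_bound_general N T hN G σ ω hω γ hγ α E P hPnonneg hPcol hPdecay d hd x hx xbar hxbar A B
    hA hB
end

section
/- Fix integers n, N ≥ 1, τ ≥ 0, T ≥ 1 and constants G > 0. Assume: X, φ, V_φ as in the context, with ∇φ Lipschitz with constant L_φ, V_φ(x, y) ≤ D_φ for all x, y ∈ X, and V_φ separately convex in its second argument (V_φ(a, Σ_j w_j b_j) ≤ Σ_j w_j V_φ(a, b_j) whenever w_j ≥ 0 and Σ_j w_j = 1). Let α : ℕ → (0, 1) be nonincreasing and E : ℕ → [0, ∞). Suppose that for every t with 1 ≤ t ≤ T + τ there are: an N×N doubly stochastic matrix P(t) with nonnegative entries, points x_j(t) ∈ X, vectors e_j(t) with ‖e_j(t)‖ ≤ E(t) and p_i(t) with ‖p_i(t)‖ ≤ 2N·E(t), points ỹ_i(t) = Σ_{j=1}^N [P(t)]_{ij}(x_j(t) + e_j(t)) + p_i(t) belonging to X, vectors g_i(t − τ) ∈ ℝ^n with ‖g_i(t − τ)‖ ≤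 G, and suppose x_i(t+1) is a minimizer over X of x ↦ ⟨g_i(t − τ), x⟩ + V_φ(x, ỹ_i(t))/α(t). Then for every x* ∈ X: (1/(NT))Σ_{t=1+τ}^{T+τ}Σ_{i=1}^{N}⟨g_i(t − τ), ỹ_i(t) − x*⟩ ≤ (2N+1)·L_φ·√(2D_φ/σ_φ)·(1/T)Σ_{t=1+τ}^{T+τ} E(t)/α(t) + (G²/(2σ_φ))·(1/T)Σ_{t=1+τ}^{T+τ} α(t) + D_φ/(T·α(T+τ)) + L_φ·(8N² + 2)·(1/T)Σ_{t=1+τ}^{T+τ} E(t)²/α(t). -/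
/-!
Each agent's update is a mirror-descent step from its perturbed average `ỹᵢ(t)`. Its first-order
optimality condition together with the three-point identity of `V_φ` gives
`⟪gᵢ, ỹᵢ - x*⟫ ≤ α G² / (2σ) + (V(x*, ỹᵢ) - V(x*, xᵢ(t+1))) / α`, Young's inequality absorbing
`⟪gᵢ, ỹᵢ - xᵢ(t+1)⟫` into `V(xᵢ(t+1), ỹᵢ)`. Separate convexity of `V_φ` and the Lipschitz gradient
bound `V(x*, ỹᵢ)` by the `P`-average of the `V(x*, xⱼ(t))` plus `L (2N+1) E(t) diam X`, and
`diam X ≤ √(2D/σ)` by strong convexity. Column stochasticity of `P(t)` turns the sum over agents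
into a decrease `S(t) - S(t+1)` of the potential `S(t) = ∑ᵢ V(x*, xᵢ(t)) ∈ [0, N D]`; as `1/α` is
nondecreasing, the weighted telescoping sum over `t` is at most `N D / α(T+τ)`.
-/

open scoped RealInnerProductSpace

open Finset

lemma nonneg_of_norm_sub_le_mul_norm {F F' : Type*} [NormedAddCommGroup F] [Nontrivial F]
    [SeminormedAddCommGroup F'] {f : F → F'} {L : ℝ} (hf : ∀ a b, ‖f a - f b‖ ≤ L * ‖a - b‖) :
    0 ≤ L := by
  obtain ⟨v, hv⟩ := exists_ne (0 : F)
  exact nonneg_of_mul_nonneg_left ((norm_nonneg _).trans (hf v 0)) (by simpa using hv)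

lemma sum_Icc_sub_div_le {S β : ℕ → ℝ} {M : ℝ} {a b : ℕ} (hab : a ≤ b) (hβ : ∀ t, 0 < β t)
    (hβ' : Antitone β) (hS : ∀ t ∈ Icc a b, S t ≤ M) :
    ∑ t ∈ Icc a b, (S t - S (t + 1)) / β t ≤ (M - S (b + 1)) / β b := by
  induction b, hab using Nat.le_induction with
  | base =>
    rw [Icc_self, sum_singleton]
    gcongr
    · exact (hβ a).le
    · exact hS a (by simp)
  | succ b hab ih =>
    rw [sum_Icc_succ_top (by omega)]
    have hSb : S (b + 1) ≤ M := hS (b + 1) (by simp only [mem_Icc]; omega)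
    calc ∑ t ∈ Icc a b, (S t - S (t + 1)) / β t + (S (b + 1) - S (b + 1 + 1)) / β (b + 1)
        ≤ (M - S (b + 1)) / β (b + 1) + (S (b + 1) - S (b + 1 + 1)) / β (b + 1) := by
          gcongr
          refine (ih fun t ht => hS t ?_).trans ?_
          · simp only [mem_Icc] at ht ⊢
            omega
          · exact div_le_div_of_nonneg_left (by linarith) (hβ _) (hβ' (Nat.le_succ b))
      _ = (M - S (b + 1 + 1)) / β (b + 1) := by
          rw [← add_div]
          ring

lemma sum_le_sum_add_div_of_le_add_sub_div {f c S β : ℕ → ℝ} {M : ℝ} {a b : ℕ} (hab : a ≤ b)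
    (hβ : ∀ t, 0 < β t) (hβ' : Antitone β) (hS : ∀ t ∈ Icc a b, S t ≤ M) (hS0 : 0 ≤ S (b + 1))
    (h : ∀ t ∈ Icc a b, f t ≤ c t + (S t - S (t + 1)) / β t) :
    ∑ t ∈ Icc a b, f t ≤ ∑ t ∈ Icc a b, c t + M / β b :=
  calc ∑ t ∈ Icc a b, f t ≤ ∑ t ∈ Icc a b, (c t + (S t - S (t + 1)) / β t) := sum_le_sum h
    _ = ∑ t ∈ Icc a b, c t + ∑ t ∈ Icc a b, (S t - S (t + 1)) / β t := sum_add_distrib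
    _ ≤ ∑ t ∈ Icc a b, c t + M / β b := by
      gcongr
      exact (sum_Icc_sub_div_le hab hβ hβ' hS).trans
        (div_le_div_of_nonneg_right (by linarith) (hβ b).le)

lemma sum_le_of_le_column_stochastic {ι : Type*} [Fintype ι] {P : Matrix ι ι ℝ}
    (hP : ∀ j, ∑ i, P i j = 1) {a s s' : ι → ℝ} {c d α : ℝ}
    (h : ∀ i, a i ≤ c + (∑ j, P i j * s j + d - s' i) / α) :
    ∑ i, a i ≤ Fintype.card ι * c + Fintype.card ι * d / α + (∑ i, s i - ∑ i, s' i) / α := by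
  have hmix : ∑ i, ∑ j, P i j * s j = ∑ j, s j := by
    rw [sum_comm]
    simp only [← sum_mul, hP, one_mul]
  calc ∑ i, a i ≤ ∑ i, (c + (∑ j, P i j * s j + d - s' i) / α) := sum_le_sum fun i _ => h i
    _ = _ := by
      simp only [sum_add_distrib, ← sum_div, sum_sub_distrib, hmix, sum_const, card_univ,
        nsmul_eq_mul]
      ring

section Bregman

variable {F : Type*} [NormedAddCommGroup F] [InnerProductSpace ℝ F] {φ : F → ℝ} {φ' : F → F}
  {σ L : ℝ}

def bregman (φ : F → ℝ) (φ' : F → F) (a b : F) : ℝ := φ a - φ b - ⟪φ' b, a - b⟫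

lemma bregman_three_point (u z y : F) :
    ⟪φ' z - φ' y, u - z⟫ = bregman φ φ' u y - bregman φ φ' u z - bregman φ φ' z y := by
  simp only [bregman, inner_sub_left, inner_sub_right]
  ring

lemma sq_norm_le_bregman (hφ : ∀ a b, φ a + ⟪φ' a, b - a⟫ + σ / 2 * ‖b - a‖ ^ 2 ≤ φ b)
    (a b : F) : σ / 2 * ‖a - b‖ ^ 2 ≤ bregman φ φ' a b := by
  have := hφ b a
  simp only [bregman]
  linarith

lemma bregman_nonneg (hσ : 0 ≤ σ)
    (hφ : ∀ a b, φ a + ⟪φ' a, b - a⟫ + σ / 2 * ‖b - a‖ ^ 2 ≤ φ b) (a b : F) :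
    0 ≤ bregman φ φ' a b :=
  le_trans (by positivity) (sq_norm_le_bregman hφ a b)

lemma norm_sub_le_sqrt_of_bregman_le (hσ : 0 < σ)
    (hφ : ∀ a b, φ a + ⟪φ' a, b - a⟫ + σ / 2 * ‖b - a‖ ^ 2 ≤ φ b) {a b : F} {D : ℝ}
    (h : bregman φ φ' a b ≤ D) : ‖a - b‖ ≤ √(2 * D / σ) := by
  rw [← Real.sqrt_sq (norm_nonneg (a - b))]
  refine Real.sqrt_le_sqrt ?_
  rw [le_div_iff₀ hσ]
  linarith [sq_norm_le_bregman hφ a b]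

lemma bregman_le_add_of_lipschitz (hσ : 0 ≤ σ)
    (hφ : ∀ a b, φ a + ⟪φ' a, b - a⟫ + σ / 2 * ‖b - a‖ ^ 2 ≤ φ b)
    (hL : ∀ a b, ‖φ' a - φ' b‖ ≤ L * ‖a - b‖) (u y' y : F) :
    bregman φ φ' u y' ≤ bregman φ φ' u y + L * ‖y' - y‖ * ‖u - y'‖ := by
  have h3 := bregman_three_point (φ := φ) (φ' := φ') u y' y
  have hcs := neg_le_of_abs_le (abs_real_inner_le_norm (φ' y' - φ' y) (u - y'))
  have hlip := mul_le_mul_of_nonneg_right (hL y' y) (norm_nonneg (u - y'))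
  linarith [bregman_nonneg hσ hφ y' y]

lemma mirror_step_variational_inequality [CompleteSpace F] {X : Set F} (hX : Convex ℝ X)
    {g y z u : F} {α : ℝ} (hα : 0 < α) (hφz : HasGradientAt φ (φ' z) z)
    (hmin : IsMinOn (fun v => ⟪g, v⟫ + bregman φ φ' v y / α) X z) (hz : z ∈ X) (hu : u ∈ X) :
    0 ≤ α * ⟪g, u - z⟫ + ⟪φ' z - φ' y, u - z⟫ := by
  have hderiv : HasFDerivAt (fun v => ⟪g, v⟫ + bregman φ φ' v y / α)
      (innerSL ℝ g + α⁻¹ • (InnerProductSpace.toDual ℝ F (φ' z) - innerSL ℝ (φ' y))) z := by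
    have hlin := ((innerSL ℝ (φ' y)).hasFDerivAt (x := z)).sub_const ⟪φ' y, y⟫
    refine ((innerSL ℝ g).hasFDerivAt.add
      (((hφz.hasFDerivAt.sub_const (φ y)).sub hlin).const_mul α⁻¹)).congr_of_eventuallyEq
      (Filter.Eventually.of_forall fun v => ?_)
    simp only [bregman, Pi.add_apply, Pi.sub_apply, innerSL_apply_apply, inner_sub_right]
    ring
  have hopt := hmin.localize.hasFDerivWithinAt_nonneg hderiv.hasFDerivWithinAt
    (sub_mem_posTangentConeAt_of_segment_subset (hX.segment_subset hz hu))
  simp only [add_apply, coe_innerSL_apply, smul_apply, sub_apply,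
    InnerProductSpace.toDual_apply_apply, smul_eq_mul] at hopt
  have := mul_nonneg hα.le hopt
  rwa [mul_add, ← mul_assoc, mul_inv_cancel₀ hα.ne', one_mul, ← inner_sub_left] at this

lemma inner_sub_le_of_mirror_step [CompleteSpace F] {X : Set F} (hX : Convex ℝ X) (hσ : 0 < σ)
    (hφ : ∀ a b, φ a + ⟪φ' a, b - a⟫ + σ / 2 * ‖b - a‖ ^ 2 ≤ φ b)
    {g y z u : F} {α G : ℝ} (hα : 0 < α) (hg : ‖g‖ ≤ G) (hφz : HasGradientAt φ (φ' z) z)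
    (hmin : IsMinOn (fun v => ⟪g, v⟫ + bregman φ φ' v y / α) X z) (hz : z ∈ X) (hu : u ∈ X) :
    ⟪g, y - u⟫ ≤ α * G ^ 2 / (2 * σ) + (bregman φ φ' u y - bregman φ φ' u z) / α := by
  have hopt := mirror_step_variational_inequality hX hα hφz hmin hz hu
  rw [bregman_three_point (φ := φ)] at hopt
  have hsplit : ⟪g, y - u⟫ = ⟪g, y - z⟫ - ⟪g, u - z⟫ := by
    rw [← inner_sub_right, sub_sub_sub_cancel_right]
  have hcs : ⟪g, y - z⟫ ≤ G * ‖z - y‖ := by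
    rw [norm_sub_rev]
    exact (real_inner_le_norm g _).trans (by gcongr)
  have hyoung : G * ‖z - y‖ ≤ α * G ^ 2 / (2 * σ) + σ / 2 * ‖z - y‖ ^ 2 / α := by
    rw [div_add_div _ _ (by positivity) hα.ne', le_div_iff₀ (by positivity)]
    nlinarith [sq_nonneg (α * G - σ * ‖z - y‖)]
  have hzy : σ / 2 * ‖z - y‖ ^ 2 / α ≤ bregman φ φ' z y / α := by
    gcongr
    exact sq_norm_le_bregman hφ z y
  have hstep : -⟪g, u - z⟫ ≤ (bregman φ φ' u y - bregman φ φ' u z) / α - bregman φ φ' z y / α := by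
    rw [← sub_div, le_div_iff₀ hα]
    linarith
  linarith

lemma bregman_perturbed_average_le {ι : Type*} [Fintype ι] {X : Set F} {D ε δ : ℝ} (hσ : 0 < σ)
    (hφ : ∀ a b, φ a + ⟪φ' a, b - a⟫ + σ / 2 * ‖b - a‖ ^ 2 ≤ φ b)
    (hL : ∀ a b, ‖φ' a - φ' b‖ ≤ L * ‖a - b‖) (hL0 : 0 ≤ L)
    (hD : ∀ a ∈ X, ∀ b ∈ X, bregman φ φ' a b ≤ D) {w : ι → ℝ} (hw : ∀ j, 0 ≤ w j)
    (hw1 : ∑ j, w j = 1) {x e : ι → F} {p u : F} (he : ∀ j, ‖e j‖ ≤ ε) (hp : ‖p‖ ≤ δ)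
    (hu : u ∈ X) (hy : ∑ j, w j • (x j + e j) + p ∈ X)
    (hsep : bregman φ φ' u (∑ j, w j • x j) ≤ ∑ j, w j * bregman φ φ' u (x j)) :
    bregman φ φ' u (∑ j, w j • (x j + e j) + p) ≤
      ∑ j, w j * bregman φ φ' u (x j) + L * (ε + δ) * √(2 * D / σ) := by
  set y := ∑ j, w j • (x j + e j) + p
  have hnoise : ‖y - ∑ j, w j • x j‖ ≤ ε + δ := by
    have hdiff : y - ∑ j, w j • x j = ∑ j, w j • e j + p := by
      simp only [y, smul_add, sum_add_distrib]
      abel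
    rw [hdiff]
    refine (norm_add_le _ _).trans (add_le_add ?_ hp)
    simpa using (convex_closedBall (0 : F) ε).sum_mem (fun j _ => hw j) hw1
      (fun j _ => by simpa using he j)
  have hdiam := norm_sub_le_sqrt_of_bregman_le hσ hφ (hD u hu y hy)
  calc bregman φ φ' u y
      ≤ bregman φ φ' u (∑ j, w j • x j) + L * ‖y - ∑ j, w j • x j‖ * ‖u - y‖ :=
        bregman_le_add_of_lipschitz hσ.le hφ hL u y _
    _ ≤ _ := add_le_add hsep (mul_le_mul (mul_le_mul_of_nonneg_left hnoise hL0) hdiam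
        (norm_nonneg _) (mul_nonneg hL0 ((norm_nonneg _).trans hnoise)))

lemma sum_inner_sub_le_of_mirror_round [CompleteSpace F] {ι : Type*} [Fintype ι] {X : Set F}
    (hX : Convex ℝ X) {D G ε δ α : ℝ} (hσ : 0 < σ)
    (hφ : ∀ a b, φ a + ⟪φ' a, b - a⟫ + σ / 2 * ‖b - a‖ ^ 2 ≤ φ b)
    (hφ' : ∀ z, HasGradientAt φ (φ' z) z) (hL : ∀ a b, ‖φ' a - φ' b‖ ≤ L * ‖a - b‖)
    (hL0 : 0 ≤ L) (hD : ∀ a ∈ X, ∀ b ∈ X, bregman φ φ' a b ≤ D) (hα : 0 < α)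
    {P : Matrix ι ι ℝ} (hP : ∀ i j, 0 ≤ P i j) (hProw : ∀ i, ∑ j, P i j = 1)
    (hPcol : ∀ j, ∑ i, P i j = 1) {x x' e p y g : ι → F} {u : F} (hu : u ∈ X)
    (hsep : ∀ i, bregman φ φ' u (∑ j, P i j • x j) ≤ ∑ j, P i j * bregman φ φ' u (x j))
    (he : ∀ j, ‖e j‖ ≤ ε) (hp : ∀ i, ‖p i‖ ≤ δ) (hy : ∀ i, y i = ∑ j, P i j • (x j + e j) + p i)
    (hyX : ∀ i, y i ∈ X) (hg : ∀ i, ‖g i‖ ≤ G) (hx' : ∀ i, x' i ∈ X)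
    (hmin : ∀ i, IsMinOn (fun v => ⟪g i, v⟫ + bregman φ φ' v (y i) / α) X (x' i)) :
    ∑ i, ⟪g i, y i - u⟫ ≤ Fintype.card ι * (α * G ^ 2 / (2 * σ))
      + Fintype.card ι * (L * (ε + δ) * √(2 * D / σ)) / α
      + (∑ i, bregman φ φ' u (x i) - ∑ i, bregman φ φ' u (x' i)) / α := by
  refine sum_le_of_le_column_stochastic hPcol fun i =>
    (inner_sub_le_of_mirror_step hX hσ hφ hα (hg i) (hφ' _) (hmin i) (hx' i) hu).trans ?_
  gcongr
  rw [hy i]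
  exact bregman_perturbed_average_le hσ hφ hL hL0 hD (hP i) (hProw i) he (hp i) hu
    (hy i ▸ hyX i) (hsep i)

end Bregman

theorem first_term_bound_general
    {n : ℕ} (N τ T : ℕ) (hn : 1 ≤ n) (hN : 1 ≤ N) (hT : 1 ≤ T)
    (X : Set (EuclideanSpace ℝ (Fin n)))
    (hXconvex : Convex ℝ X)
    (G : ℝ)
    (φ : EuclideanSpace ℝ (Fin n) → ℝ)
    (gradφ : EuclideanSpace ℝ (Fin n) → EuclideanSpace ℝ (Fin n))
    (hgrad : ∀ x, HasGradientAt φ (gradφ x) x)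
    (σ : ℝ) (hσ : 0 < σ)
    (hstrong : ∀ a b, φ b ≥ φ a + ⟪gradφ a, b - a⟫ + σ / 2 * ‖b - a‖ ^ 2)
    (L : ℝ) (hLip : ∀ a b, ‖gradφ a - gradφ b‖ ≤ L * ‖a - b‖)
    (V : EuclideanSpace ℝ (Fin n) → EuclideanSpace ℝ (Fin n) → ℝ)
    (hV : ∀ a b, V a b = φ a - φ b - ⟪gradφ b, a - b⟫)
    (D : ℝ) (hD : ∀ a ∈ X, ∀ b ∈ X, V a b ≤ D)
    (hVsepconv : ∀ (m : ℕ) (w : Fin m → ℝ) (b : Fin m → EuclideanSpace ℝ (Fin n))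
      (a : EuclideanSpace ℝ (Fin n)), (∀ j, 0 ≤ w j) → ∑ j, w j = 1 →
      V a (∑ j, w j • b j) ≤ ∑ j, w j * V a (b j))
    (α : ℕ → ℝ) (hα : ∀ t, α t ∈ Set.Ioo (0 : ℝ) 1) (hαmono : Antitone α)
    (E : ℕ → ℝ)
    (P : ℕ → Matrix (Fin N) (Fin N) ℝ)
    (hPnonneg : ∀ t, t ∈ Finset.Icc 1 (T + τ) → ∀ i j, 0 ≤ P t i j)
    (hProw : ∀ t, t ∈ Finset.Icc 1 (T + τ) → ∀ i, ∑ j, P t i j = 1)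
    (hPcol : ∀ t, t ∈ Finset.Icc 1 (T + τ) → ∀ j, ∑ i, P t i j = 1)
    (x e p ytilde g : Fin N → ℕ → EuclideanSpace ℝ (Fin n))
    (hx : ∀ j t, t ∈ Finset.Icc 1 (T + τ) → x j t ∈ X)
    (he : ∀ j t, t ∈ Finset.Icc 1 (T + τ) → ‖e j t‖ ≤ E t)
    (hp : ∀ i t, t ∈ Finset.Icc 1 (T + τ) → ‖p i t‖ ≤ 2 * N * E t)
    (hyt : ∀ i t, t ∈ Finset.Icc 1 (T + τ) →
      ytilde i t = (∑ j, P t i j • (x j t + e j t)) + p i t)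
    (hytX : ∀ i t, t ∈ Finset.Icc 1 (T + τ) → ytilde i t ∈ X)
    (hg : ∀ i t, t ∈ Finset.Icc 1 (T + τ) → ‖g i t‖ ≤ G)
    (hxmin : ∀ i t, t ∈ Finset.Icc 1 (T + τ) → x i (t + 1) ∈ X ∧
      ∀ u ∈ X, ⟪g i t, x i (t + 1)⟫ + V (x i (t + 1)) (ytilde i t) / α t ≤
        ⟪g i t, u⟫ + V u (ytilde i t) / α t)
    (xstar : EuclideanSpace ℝ (Fin n)) (hxstar : xstar ∈ X) :
    (1 / ((N : ℝ) * T)) *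
        ∑ t ∈ Finset.Icc (1 + τ) (T + τ), ∑ i, ⟪g i t, ytilde i t - xstar⟫ ≤
      (2 * N + 1) * L * Real.sqrt (2 * D / σ) *
          ((1 / (T : ℝ)) * ∑ t ∈ Finset.Icc (1 + τ) (T + τ), E t / α t)
        + G ^ 2 / (2 * σ) * ((1 / (T : ℝ)) * ∑ t ∈ Finset.Icc (1 + τ) (T + τ), α t)
        + D / ((T : ℝ) * α (T + τ))
        + L * (8 * N ^ 2 + 2) *
            ((1 / (T : ℝ)) * ∑ t ∈ Finset.Icc (1 + τ) (T + τ), E t ^ 2 / α t) := by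
  obtain rfl : V = bregman φ gradφ := funext fun a => funext fun b => hV a b
  have : Nonempty (Fin n) := ⟨⟨0, hn⟩⟩
  have hL : 0 ≤ L := nonneg_of_norm_sub_le_mul_norm hLip
  have hαpos : ∀ t, 0 < α t := fun t => (hα t).1
  have hIcc : ∀ t ∈ Icc (1 + τ) (T + τ), t ∈ Icc 1 (T + τ) := fun t ht => by
    simp only [mem_Icc] at ht ⊢
    omega
  set R := √(2 * D / σ)
  set S : ℕ → ℝ := fun t => ∑ i, bregman φ gradφ xstar (x i t)
  have hround : ∀ t ∈ Icc (1 + τ) (T + τ), ∑ i, ⟪g i t, ytilde i t - xstar⟫ ≤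
      (N * (α t * G ^ 2 / (2 * σ)) + N * (L * (E t + 2 * N * E t) * R) / α t)
        + (S t - S (t + 1)) / α t := by
    intro t ht
    have ht := hIcc t ht
    simpa using sum_inner_sub_le_of_mirror_round hXconvex hσ hstrong hgrad hLip hL hD (hαpos t)
      (hPnonneg t ht) (hProw t ht) (hPcol t ht) hxstar
      (fun i => hVsepconv N (P t i) _ xstar (hPnonneg t ht i) (hProw t ht i))
      (fun j => he j t ht) (fun i => hp i t ht) (fun i => hyt i t ht) (fun i => hytX i t ht)
      (fun i => hg i t ht) (fun i => (hxmin i t ht).1) (fun i => isMinOn_iff.mpr (hxmin i t ht).2)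
  have hsum := sum_le_sum_add_div_of_le_add_sub_div (M := N * D) (by omega) hαpos hαmono
    (fun t ht => (sum_le_sum fun i _ => hD xstar hxstar _ (hx i t (hIcc t ht))).trans_eq
      (by simp))
    (sum_nonneg fun i _ => bregman_nonneg hσ.le hstrong _ _) hround
  have hcost : ∑ t ∈ Icc (1 + τ) (T + τ),
      (N * (α t * G ^ 2 / (2 * σ)) + N * (L * (E t + 2 * N * E t) * R) / α t) =
        N * (G ^ 2 / (2 * σ) * ∑ t ∈ Icc (1 + τ) (T + τ), α t
          + (2 * N + 1) * L * R * ∑ t ∈ Icc (1 + τ) (T + τ), E t / α t) := by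
    simp only [mul_add, mul_sum, ← sum_add_distrib]
    exact sum_congr rfl fun t _ => by ring
  have hN0 : (0 : ℝ) < N := by exact_mod_cast hN
  have hT0 : (0 : ℝ) < T := by exact_mod_cast hT
  refine le_add_of_le_of_nonneg ?_ (by
    have := sum_nonneg fun t (_ : t ∈ Icc (1 + τ) (T + τ)) =>
      div_nonneg (sq_nonneg (E t)) (hαpos t).le
    positivity)
  rw [hcost] at hsum
  rw [one_div, ← div_eq_inv_mul, div_le_iff₀ (by positivity)]
  refine hsum.trans_eq ?_
  have := (hαpos (T + τ)).ne'
  field_simp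
  ring

/-- Lemma 6: bound on the first term B₁ in the convergence analysis of
Algorithm 1. -/
theorem first_term_bound
    {n : ℕ} (N τ T : ℕ) (hn : 1 ≤ n) (hN : 1 ≤ N) (hT : 1 ≤ T)
    (X : Set (EuclideanSpace ℝ (Fin n)))
    (hXne : X.Nonempty) (hXcompact : IsCompact X) (hXconvex : Convex ℝ X)
    (G : ℝ) (hG : 0 < G)
    (φ : EuclideanSpace ℝ (Fin n) → ℝ)
    (gradφ : EuclideanSpace ℝ (Fin n) → EuclideanSpace ℝ (Fin n))
    (hφC1 : ContDiff ℝ 1 φ)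
    (hgrad : ∀ x, HasGradientAt φ (gradφ x) x)
    (σ : ℝ) (hσ : 0 < σ)
    (hstrong : ∀ a b, φ b ≥ φ a + ⟪gradφ a, b - a⟫ + σ / 2 * ‖b - a‖ ^ 2)
    (L : ℝ) (hLip : ∀ a b, ‖gradφ a - gradφ b‖ ≤ L * ‖a - b‖)
    (V : EuclideanSpace ℝ (Fin n) → EuclideanSpace ℝ (Fin n) → ℝ)
    (hV : ∀ a b, V a b = φ a - φ b - ⟪gradφ b, a - b⟫)
    (D : ℝ) (hD : ∀ a ∈ X, ∀ b ∈ X, V a b ≤ D)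
    (hVsepconv : ∀ (m : ℕ) (w : Fin m → ℝ) (b : Fin m → EuclideanSpace ℝ (Fin n))
      (a : EuclideanSpace ℝ (Fin n)), (∀ j, 0 ≤ w j) → ∑ j, w j = 1 →
      V a (∑ j, w j • b j) ≤ ∑ j, w j * V a (b j))
    (α : ℕ → ℝ) (hα : ∀ t, α t ∈ Set.Ioo (0 : ℝ) 1) (hαmono : Antitone α)
    (E : ℕ → ℝ) (hE : ∀ t, 0 ≤ E t)
    (P : ℕ → Matrix (Fin N) (Fin N) ℝ)
    (hPnonneg : ∀ t, t ∈ Finset.Icc 1 (T + τ) → ∀ i j, 0 ≤ P t i j)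
    (hProw : ∀ t, t ∈ Finset.Icc 1 (T + τ) → ∀ i, ∑ j, P t i j = 1)
    (hPcol : ∀ t, t ∈ Finset.Icc 1 (T + τ) → ∀ j, ∑ i, P t i j = 1)
    (x e p ytilde g : Fin N → ℕ → EuclideanSpace ℝ (Fin n))
    (hx : ∀ j t, t ∈ Finset.Icc 1 (T + τ) → x j t ∈ X)
    (he : ∀ j t, t ∈ Finset.Icc 1 (T + τ) → ‖e j t‖ ≤ E t)
    (hp : ∀ i t, t ∈ Finset.Icc 1 (T + τ) → ‖p i t‖ ≤ 2 * N * E t)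
    (hyt : ∀ i t, t ∈ Finset.Icc 1 (T + τ) →
      ytilde i t = (∑ j, P t i j • (x j t + e j t)) + p i t)
    (hytX : ∀ i t, t ∈ Finset.Icc 1 (T + τ) → ytilde i t ∈ X)
    (hg : ∀ i t, t ∈ Finset.Icc 1 (T + τ) → ‖g i t‖ ≤ G)
    (hxmin : ∀ i t, t ∈ Finset.Icc 1 (T + τ) → x i (t + 1) ∈ X ∧
      ∀ u ∈ X, ⟪g i t, x i (t + 1)⟫ + V (x i (t + 1)) (ytilde i t) / α t ≤
        ⟪g i t, u⟫ + V u (ytilde i t) / α t)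
    (xstar : EuclideanSpace ℝ (Fin n)) (hxstar : xstar ∈ X) :
    (1 / ((N : ℝ) * T)) *
        ∑ t ∈ Finset.Icc (1 + τ) (T + τ), ∑ i, ⟪g i t, ytilde i t - xstar⟫ ≤
      (2 * N + 1) * L * Real.sqrt (2 * D / σ) *
          ((1 / (T : ℝ)) * ∑ t ∈ Finset.Icc (1 + τ) (T + τ), E t / α t)
        + G ^ 2 / (2 * σ) * ((1 / (T : ℝ)) * ∑ t ∈ Finset.Icc (1 + τ) (T + τ), α t)
        + D / ((T : ℝ) * α (T + τ))
        + L * (8 * N ^ 2 + 2) *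
            ((1 / (T : ℝ)) * ∑ t ∈ Finset.Icc (1 + τ) (T + τ), E t ^ 2 / α t) :=
  first_term_bound_general N τ T hn hN hT X hXconvex G φ gradφ hgrad σ hσ hstrong L hLip V hV D hD
    hVsepconv α hα hαmono E P hPnonneg hProw hPcol x e p ytilde g hx he hp hyt hytX hg hxmin xstar
    hxstar
end
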